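/- Let R ∈ ℂⁿˣⁿ be Hermitian, and let (v^{(t)})_{t≥0} be a sequence of unit-modulus vectors in ℂⁿ such that for every t, all entries of R v^{(t)} are nonzero and v^{(t+1)} = unt(R v^{(t)}). Then the real sequence t ↦ ‖R v^{(t)}‖₁ is monotone nondecreasing, bounded above by Σᵢ Σⱼ |r_{i,j}|, and hence converges. -/

import Mathlib

open Matrix Filter

/-!
Since `R` is Hermitian, `‖R v‖₁ = Re ⟨unt (R v), R v⟩ = Re ⟨v, R (unt (R v))⟩`, and as the
entries of `v` have modulus at most one, the right-hand side is at most `‖R (unt (R v))‖₁`. The bound `Σᵢ Σⱼ |r_{i,j}|` is the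
triangle inequality, and a bounded monotone real sequence converges.
-/

section Unt

variable {𝕜 ι : Type*} [RCLike 𝕜]

/-- A zero entry stays zero, since `0 / 0 = 0`. -/
def unt (w : ι → 𝕜) : ι → 𝕜 := fun i => w i / (‖w i‖ : 𝕜)

theorem RCLike.star_div_norm_mul_self (z : 𝕜) : star (z / (‖z‖ : 𝕜)) * z = ‖z‖ := by
  rcases eq_or_ne z 0 with rfl | hz
  · simp
  have hnorm : (‖z‖ : 𝕜) ≠ 0 := RCLike.ofReal_ne_zero.mpr (norm_ne_zero_iff.mpr hz)
  rw [star_div₀, RCLike.star_def, RCLike.conj_ofReal, div_mul_eq_mul_div, RCLike.conj_mul, sq,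
    mul_div_cancel_right₀ _ hnorm]

variable [Fintype ι]

theorem star_unt_dotProduct_self (w : ι → 𝕜) :
    star (unt w) ⬝ᵥ w = ∑ i, (‖w i‖ : 𝕜) :=
  Finset.sum_congr rfl fun i _ => RCLike.star_div_norm_mul_self (w i)

theorem re_star_dotProduct_le_sum_norm {u : ι → 𝕜} (hu : ∀ i, ‖u i‖ ≤ 1) (w : ι → 𝕜) :
    RCLike.re (star u ⬝ᵥ w) ≤ ∑ i, ‖w i‖ := by
  rw [dotProduct, map_sum]
  refine Finset.sum_le_sum fun i _ => ?_
  calc RCLike.re (star (u i) * w i) ≤ ‖star (u i) * w i‖ := RCLike.re_le_norm _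
    _ = ‖u i‖ * ‖w i‖ := by rw [norm_mul, norm_star]
    _ ≤ ‖w i‖ := mul_le_of_le_one_left (norm_nonneg _) (hu i)

end Unt

theorem Matrix.IsHermitian.star_dotProduct_mulVec_comm {α m : Type*} [Fintype m]
    [NonUnitalSemiring α] [StarRing α] {A : Matrix m m α} (hA : A.IsHermitian) (u w : m → α) :
    star u ⬝ᵥ (A *ᵥ w) = star (star w ⬝ᵥ (A *ᵥ u)) := by
  rw [← star_dotProduct, star_mulVec, hA.eq, dotProduct_mulVec]

theorem Matrix.sum_norm_mulVec_le_sum_sum_norm {α m n : Type*} [Fintype m] [Fintype n]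
    [NormedRing α] (A : Matrix m n α) {u : n → α} (hu : ∀ j, ‖u j‖ ≤ 1) :
    ∑ i, ‖(A *ᵥ u) i‖ ≤ ∑ i, ∑ j, ‖A i j‖ := by
  refine Finset.sum_le_sum fun i _ => (norm_sum_le _ _).trans (Finset.sum_le_sum fun j _ => ?_)
  calc ‖A i j * u j‖ ≤ ‖A i j‖ * ‖u j‖ := norm_mul_le _ _
    _ ≤ ‖A i j‖ := mul_le_of_le_one_right (norm_nonneg _) (hu j)

theorem Matrix.IsHermitian.sum_norm_mulVec_le_sum_norm_mulVec_unt {𝕜 ι : Type*} [RCLike 𝕜]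
    [Fintype ι] {A : Matrix ι ι 𝕜} (hA : A.IsHermitian) {u : ι → 𝕜} (hu : ∀ i, ‖u i‖ ≤ 1) :
    ∑ i, ‖(A *ᵥ u) i‖ ≤ ∑ i, ‖(A *ᵥ unt (A *ᵥ u)) i‖ :=
  calc ∑ i, ‖(A *ᵥ u) i‖ = RCLike.re (star (unt (A *ᵥ u)) ⬝ᵥ (A *ᵥ u)) := by
        simp only [star_unt_dotProduct_self, map_sum, RCLike.ofReal_re]
    _ = RCLike.re (star u ⬝ᵥ (A *ᵥ unt (A *ᵥ u))) := by
        rw [hA.star_dotProduct_mulVec_comm, RCLike.star_def, RCLike.conj_re]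
    _ ≤ ∑ i, ‖(A *ᵥ unt (A *ᵥ u)) i‖ := re_star_dotProduct_le_sum_norm hu _

theorem stmt_8_general {n : ℕ} (R : Matrix (Fin n) (Fin n) ℂ) (hR : R.IsHermitian)
    (v : ℕ → Fin n → ℂ) (hv : ∀ t, ∀ i, ‖v t i‖ = 1)
    (hit : ∀ t, v (t + 1) = fun i => (R *ᵥ v t) i / (‖(R *ᵥ v t) i‖ : ℂ)) :
    Monotone (fun t => ∑ i, ‖(R *ᵥ v t) i‖) ∧
    (∀ t, (∑ i, ‖(R *ᵥ v t) i‖) ≤ ∑ i, ∑ j, ‖R i j‖) ∧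
    ∃ L : ℝ, Tendsto (fun t => ∑ i, ‖(R *ᵥ v t) i‖) atTop (nhds L) := by
  have hv_le (t : ℕ) (i : Fin n) : ‖v t i‖ ≤ 1 := (hv t i).le
  have hmono : Monotone (fun t => ∑ i, ‖(R *ᵥ v t) i‖) := monotone_nat_of_le_succ fun t => by
    rw [hit t]
    exact hR.sum_norm_mulVec_le_sum_norm_mulVec_unt (hv_le t)
  have hbdd (t : ℕ) : ∑ i, ‖(R *ᵥ v t) i‖ ≤ ∑ i, ∑ j, ‖R i j‖ :=
    R.sum_norm_mulVec_le_sum_sum_norm (hv_le t)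
  refine ⟨hmono, hbdd, _, tendsto_atTop_ciSup hmono ⟨∑ i, ∑ j, ‖R i j‖, ?_⟩⟩
  rintro _ ⟨t, rfl⟩
  exact hbdd t

/-- For a Hermitian `R` and a sequence of unit-modulus vectors with
`v⁽ᵗ⁺¹⁾ = unt(R v⁽ᵗ⁾)` (all entries of `R v⁽ᵗ⁾` nonzero), the sequence
`t ↦ ‖R v⁽ᵗ⁾‖₁` is monotone nondecreasing, bounded above by `Σᵢ Σⱼ |r_{i,j}|`,
and hence converges. -/
theorem stmt_8 {n : ℕ} (R : Matrix (Fin n) (Fin n) ℂ) (hR : R.IsHermitian)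
    (v : ℕ → Fin n → ℂ) (hv : ∀ t, ∀ i, ‖v t i‖ = 1)
    (hnz : ∀ t, ∀ i, (R *ᵥ v t) i ≠ 0)
    (hit : ∀ t, v (t + 1) = fun i => (R *ᵥ v t) i / (‖(R *ᵥ v t) i‖ : ℂ)) :
    Monotone (fun t => ∑ i, ‖(R *ᵥ v t) i‖) ∧
    (∀ t, (∑ i, ‖(R *ᵥ v t) i‖) ≤ ∑ i, ∑ j, ‖R i j‖) ∧
    ∃ L : ℝ, Tendsto (fun t => ∑ i, ‖(R *ᵥ v t) i‖) atTop (nhds L) :=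
  stmt_8_general R hR v hv hit
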